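/- arXiv:2412.18568 — 4 statements merged into one kernel-verified Lean document; each statement's English description precedes it below -/
import Mathlib

section
/- Let Y = τ·z + X₀·β₀ + ε be a random vector in ℝⁿ with ε integrable, E[ε] = 0 and E[ε εᵀ] = σ²·Iₙ. For i = 1, 2, let X_i be an n×d_i real matrix, and suppose the column space of X₀ is contained in that of X₂, the column space of X₂ is contained in that of X₁, each D_i = [z X_i] has full column rank d_i + 1, and d_i + 1 < n. Define σ̂²_i = [Yᵀ(Iₙ − D_i(D_iᵀD_i)⁻¹D_iᵀ)Y/(n − d_i − 1)] · e₁ᵀ(D_iᵀD_i)⁻¹e₁, where e₁ is the first standard basis vector. Then E[σ̂²₁] ≥ E[σ̂²₂]. -/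
/-!
For a design `D` whose column space contains the mean, the residual projection
`A = I - D(DᵀD)⁻¹Dᵀ` satisfies `AY = Aε`, so `E[YᵀAY] = σ² tr A = σ² (n - rank D)` and the
expected squared standard error is exactly `σ² (DᵀD)⁻¹₀₀`. By Cauchy–Schwarz,
`(DᵀD)⁻¹₀₀ = max_u (u₀)² / ‖Du‖²`, attained at `u = (DᵀD)⁻¹e₀`. Every `D₂w` is some `D₁u` with
`u₀ = w₀`, so this maximum can only grow when passing from `D₂` to `D₁`.
-/

open MeasureTheory Matrix

theorem dotProduct_sq_le_dotProduct_self_mul {ι : Type*} [Fintype ι] (v w : ι → ℝ) :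
    (v ⬝ᵥ w) ^ 2 ≤ (v ⬝ᵥ v) * (w ⬝ᵥ w) := by
  simpa only [dotProduct, sq] using Finset.sum_mul_sq_le_sq_mul_sq Finset.univ v w

section Gram

variable {m ι : Type*} [Fintype m] [Fintype ι]

theorem mulVec_dotProduct_mulVec (D : Matrix m ι ℝ) (v w : ι → ℝ) :
    D *ᵥ v ⬝ᵥ D *ᵥ w = v ⬝ᵥ (Dᵀ * D) *ᵥ w := by
  rw [← mulVec_mulVec, dotProduct_transpose_mulVec, dotProduct_comm]

variable [DecidableEq ι] {D : Matrix m ι ℝ}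

theorem isUnit_det_transpose_mul_self_of_rank_eq (h : D.rank = Fintype.card ι) :
    IsUnit (Dᵀ * D).det := by
  rw [← isUnit_iff_isUnit_det, ← mulVec_injective_iff_isUnit, mulVec_injective_iff,
    linearIndependent_iff_card_eq_finrank_span, Set.finrank, ← rank_eq_finrank_span_cols,
    rank_transpose_mul_self, h]

theorem mulVec_dotProduct_mulVec_gram_inv_single (hS : IsUnit (Dᵀ * D).det) (v : ι → ℝ)
    (i : ι) : D *ᵥ v ⬝ᵥ D *ᵥ ((Dᵀ * D)⁻¹ *ᵥ Pi.single i 1) = v i := by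
  rw [mulVec_dotProduct_mulVec, mulVec_mulVec, mul_nonsing_inv _ hS, one_mulVec,
    dotProduct_single, mul_one]

theorem gram_inv_apply_eq_dotProduct_self (hS : IsUnit (Dᵀ * D).det) (i : ι) :
    (Dᵀ * D)⁻¹ i i =
      D *ᵥ ((Dᵀ * D)⁻¹ *ᵥ Pi.single i 1) ⬝ᵥ D *ᵥ ((Dᵀ * D)⁻¹ *ᵥ Pi.single i 1) := by
  rw [mulVec_dotProduct_mulVec_gram_inv_single hS, mulVec_single_one, col_apply]

theorem gram_inv_apply_nonneg (hS : IsUnit (Dᵀ * D).det) (i : ι) : 0 ≤ (Dᵀ * D)⁻¹ i i := by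
  rw [gram_inv_apply_eq_dotProduct_self hS]
  exact Finset.sum_nonneg fun j _ => mul_self_nonneg _

theorem sq_le_gram_inv_apply_mul (hS : IsUnit (Dᵀ * D).det) (i : ι) (u : ι → ℝ) :
    u i ^ 2 ≤ (Dᵀ * D)⁻¹ i i * (D *ᵥ u ⬝ᵥ D *ᵥ u) := by
  rw [← mulVec_dotProduct_mulVec_gram_inv_single hS u i, gram_inv_apply_eq_dotProduct_self hS,
    dotProduct_comm]
  apply dotProduct_sq_le_dotProduct_self_mul

theorem gram_inv_apply_le_of_forall_exists {κ : Type*} [Fintype κ] [DecidableEq κ]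
    {E : Matrix m κ ℝ} (hS : IsUnit (Dᵀ * D).det) (hT : IsUnit (Eᵀ * E).det) (i : ι) (k : κ)
    (hcol : ∀ w, ∃ u, D *ᵥ u = E *ᵥ w ∧ u i = w k) :
    (Eᵀ * E)⁻¹ k k ≤ (Dᵀ * D)⁻¹ i i := by
  obtain ⟨u, hDu, hui⟩ := hcol ((Eᵀ * E)⁻¹ *ᵥ Pi.single k 1)
  have hcs := sq_le_gram_inv_apply_mul hS i u
  rw [hDu, ← gram_inv_apply_eq_dotProduct_self hT, hui, mulVec_single_one, col_apply] at hcs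
  nlinarith [gram_inv_apply_nonneg hS i, gram_inv_apply_nonneg hT k]

end Gram

section Residual

variable {n ι : Type*} [Fintype n] [DecidableEq n] [Fintype ι] [DecidableEq ι]

theorem transpose_residual (D : Matrix n ι ℝ) :
    (1 - D * (Dᵀ * D)⁻¹ * Dᵀ)ᵀ = 1 - D * (Dᵀ * D)⁻¹ * Dᵀ := by
  rw [transpose_sub, transpose_one, transpose_mul, transpose_mul, transpose_transpose,
    transpose_nonsing_inv, transpose_mul, transpose_transpose, Matrix.mul_assoc]

theorem residual_mul_self {D : Matrix n ι ℝ} (hS : IsUnit (Dᵀ * D).det) :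
    (1 - D * (Dᵀ * D)⁻¹ * Dᵀ) * D = 0 := by
  rw [Matrix.sub_mul, Matrix.one_mul, Matrix.mul_assoc, Matrix.mul_assoc,
    nonsing_inv_mul _ hS, Matrix.mul_one, sub_self]

theorem trace_residual {D : Matrix n ι ℝ} (hS : IsUnit (Dᵀ * D).det) :
    (1 - D * (Dᵀ * D)⁻¹ * Dᵀ).trace = (Fintype.card n - Fintype.card ι : ℝ) := by
  rw [trace_sub, trace_one, Matrix.mul_assoc, trace_mul_comm, Matrix.mul_assoc,
    nonsing_inv_mul _ hS, trace_one]

end Residual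

theorem add_dotProduct_mulVec_add_of_mulVec_eq_zero {n : Type*} [Fintype n]
    {A : Matrix n n ℝ} (hA : Aᵀ = A) {v : n → ℝ} (hv : A *ᵥ v = 0) (e : n → ℝ) :
    (v + e) ⬝ᵥ A *ᵥ (v + e) = e ⬝ᵥ A *ᵥ e := by
  rw [mulVec_add, hv, zero_add, add_dotProduct, ← hA, dotProduct_transpose_mulVec, hA, hv,
    dotProduct_zero, zero_add]

section Moments

variable {Ω n : Type*} [MeasurableSpace Ω] {μ : Measure Ω} [Fintype n] [DecidableEq n]
  {σ : ℝ} {ε : Ω → n → ℝ}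

theorem integral_dotProduct_mulVec_self
    (hε2int : ∀ i j, Integrable (fun ω => ε ω i * ε ω j) μ)
    (hεcov : ∀ i j, ∫ ω, ε ω i * ε ω j ∂μ = if i = j then σ ^ 2 else 0)
    (A : Matrix n n ℝ) :
    ∫ ω, ε ω ⬝ᵥ A *ᵥ ε ω ∂μ = σ ^ 2 * A.trace := by
  have hexpand : ∀ ω, ε ω ⬝ᵥ A *ᵥ ε ω = ∑ i, ∑ j, A i j * (ε ω i * ε ω j) := fun ω => by
    simp only [dotProduct, mulVec, Finset.mul_sum]
    exact Finset.sum_congr rfl fun i _ => Finset.sum_congr rfl fun j _ => by ring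
  simp_rw [hexpand]
  rw [integral_finsetSum _ fun i _ => integrable_finsetSum _ fun j _ =>
    (hε2int i j).const_mul (A i j)]
  simp_rw [integral_finsetSum _ fun j _ => (hε2int _ j).const_mul _, integral_const_mul,
    hεcov, mul_ite, mul_zero, Finset.sum_ite_eq, Finset.mem_univ, if_true, trace, diag_apply,
    Finset.mul_sum, mul_comm]

theorem integral_residual_quadForm {ι : Type*} [Fintype ι] [DecidableEq ι] {Y : Ω → n → ℝ}
    (hε2int : ∀ i j, Integrable (fun ω => ε ω i * ε ω j) μ)
    (hεcov : ∀ i j, ∫ ω, ε ω i * ε ω j ∂μ = if i = j then σ ^ 2 else 0)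
    {D : Matrix n ι ℝ} (hS : IsUnit (Dᵀ * D).det) {γ : ι → ℝ}
    (hY : ∀ ω, Y ω = D *ᵥ γ + ε ω) :
    ∫ ω, Y ω ⬝ᵥ (1 - D * (Dᵀ * D)⁻¹ * Dᵀ) *ᵥ Y ω ∂μ =
      σ ^ 2 * (Fintype.card n - Fintype.card ι) := by
  have hkill : (1 - D * (Dᵀ * D)⁻¹ * Dᵀ) *ᵥ (D *ᵥ γ) = 0 := by
    rw [mulVec_mulVec, residual_mul_self hS, zero_mulVec]
  simp_rw [hY, add_dotProduct_mulVec_add_of_mulVec_eq_zero (transpose_residual D) hkill]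
  rw [integral_dotProduct_mulVec_self hε2int hεcov, trace_residual hS]

end Moments

theorem integral_ols_variance_estimate {Ω : Type*} [MeasurableSpace Ω] {μ : Measure Ω}
    {n d : ℕ} {σ : ℝ} {ε Y : Ω → Fin n → ℝ}
    (hε2int : ∀ i j, Integrable (fun ω => ε ω i * ε ω j) μ)
    (hεcov : ∀ i j, ∫ ω, ε ω i * ε ω j ∂μ = if i = j then σ ^ 2 else 0)
    {D : Matrix (Fin n) (Fin (d + 1)) ℝ} (hS : IsUnit (Dᵀ * D).det) {γ : Fin (d + 1) → ℝ}
    (hY : ∀ ω, Y ω = D *ᵥ γ + ε ω) (hd : d + 1 < n) (k : Fin (d + 1)) :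
    ∫ ω, (Y ω ⬝ᵥ (1 - D * (Dᵀ * D)⁻¹ * Dᵀ) *ᵥ Y ω) / ((n : ℝ) - d - 1) * (Dᵀ * D)⁻¹ k k ∂μ =
      σ ^ 2 * (Dᵀ * D)⁻¹ k k := by
  have hdf : (n : ℝ) - d - 1 ≠ 0 := by
    have : (d : ℝ) + 1 < n := by exact_mod_cast hd
    linarith
  rw [integral_mul_const, integral_div, integral_residual_quadForm hε2int hεcov hS hY,
    Fintype.card_fin, Fintype.card_fin, Nat.cast_add, Nat.cast_one, ← sub_sub,
    mul_div_cancel_right₀ _ hdf]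

theorem mulVec_cons_of_augmented {n d : ℕ} {z : Fin n → ℝ} {X : Matrix (Fin n) (Fin d) ℝ}
    {D : Matrix (Fin n) (Fin (d + 1)) ℝ} (hD : ∀ i j, D i j = Fin.cases (z i) (fun k => X i k) j)
    (a : ℝ) (v : Fin d → ℝ) : D *ᵥ Fin.cons a v = a • z + X *ᵥ v := by
  ext i
  simp only [mulVec, dotProduct, Fin.sum_univ_succ, hD, Fin.cases_zero, Fin.cases_succ,
    Fin.cons_zero, Fin.cons_succ, Pi.add_apply, Pi.smul_apply, smul_eq_mul]
  ring

theorem adet_ols_variance_monotone_general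
    {Ω : Type*} [MeasurableSpace Ω] (μ : Measure Ω)
    {n d₀ d₁ d₂ : ℕ} (τ σ : ℝ) (z : Fin n → ℝ)
    (X₀ : Matrix (Fin n) (Fin d₀) ℝ) (β₀ : Fin d₀ → ℝ)
    (X₁ : Matrix (Fin n) (Fin d₁) ℝ) (X₂ : Matrix (Fin n) (Fin d₂) ℝ)
    (M₀ : Matrix (Fin d₂) (Fin d₀) ℝ) (hX₀ : X₀ = X₂ * M₀)
    (M₂ : Matrix (Fin d₁) (Fin d₂) ℝ) (hX₂ : X₂ = X₁ * M₂)
    (ε : Ω → Fin n → ℝ)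
    (hε2int : ∀ i j, Integrable (fun ω => ε ω i * ε ω j) μ)
    (hεcov : ∀ i j, ∫ ω, ε ω i * ε ω j ∂μ = if i = j then σ ^ 2 else 0)
    (Y : Ω → Fin n → ℝ)
    (hY : ∀ ω i, Y ω i = τ * z i + X₀.mulVec β₀ i + ε ω i)
    (D₁ : Matrix (Fin n) (Fin (d₁ + 1)) ℝ)
    (hD₁ : ∀ i j, D₁ i j = Fin.cases (z i) (fun k => X₁ i k) j)
    (D₂ : Matrix (Fin n) (Fin (d₂ + 1)) ℝ)
    (hD₂ : ∀ i j, D₂ i j = Fin.cases (z i) (fun k => X₂ i k) j)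
    (hrank₁ : D₁.rank = d₁ + 1) (hrank₂ : D₂.rank = d₂ + 1)
    (hd₁ : d₁ + 1 < n) (hd₂ : d₂ + 1 < n) :
    (∫ ω, (Y ω ⬝ᵥ (1 - D₁ * (D₁ᵀ * D₁)⁻¹ * D₁ᵀ).mulVec (Y ω)) / ((n : ℝ) - d₁ - 1)
        * ((D₁ᵀ * D₁)⁻¹ 0 0) ∂μ) ≥
      ∫ ω, (Y ω ⬝ᵥ (1 - D₂ * (D₂ᵀ * D₂)⁻¹ * D₂ᵀ).mulVec (Y ω)) / ((n : ℝ) - d₂ - 1)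
        * ((D₂ᵀ * D₂)⁻¹ 0 0) ∂μ := by
  have hS₁ := isUnit_det_transpose_mul_self_of_rank_eq (D := D₁) (by rwa [Fintype.card_fin])
  have hS₂ := isUnit_det_transpose_mul_self_of_rank_eq (D := D₂) (by rwa [Fintype.card_fin])
  have hY₁ : ∀ ω, Y ω = D₁ *ᵥ Fin.cons τ ((M₂ * M₀) *ᵥ β₀) + ε ω := fun ω => by
    rw [mulVec_cons_of_augmented hD₁, mulVec_mulVec, ← Matrix.mul_assoc, ← hX₂, ← hX₀]
    exact funext (hY ω)
  have hY₂ : ∀ ω, Y ω = D₂ *ᵥ Fin.cons τ (M₀ *ᵥ β₀) + ε ω := fun ω => by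
    rw [mulVec_cons_of_augmented hD₂, mulVec_mulVec, ← hX₀]
    exact funext (hY ω)
  rw [integral_ols_variance_estimate hε2int hεcov hS₁ hY₁ hd₁,
    integral_ols_variance_estimate hε2int hεcov hS₂ hY₂ hd₂]
  refine mul_le_mul_of_nonneg_left (gram_inv_apply_le_of_forall_exists hS₁ hS₂ 0 0 fun w =>
    ⟨Fin.cons (w 0) (M₂ *ᵥ Fin.tail w), ?_, rfl⟩) (sq_nonneg σ)
  rw [mulVec_cons_of_augmented hD₁, mulVec_mulVec, ← hX₂, ← mulVec_cons_of_augmented hD₂,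
    Fin.cons_self_tail]

/-- Proposition 1 (variance-monotonicity part): in the model `Y = τ·z + X₀β₀ + ε`
with `E[ε] = 0` and `E[εεᵀ] = σ²Iₙ`, if the column spaces satisfy
`col(X₀) ⊆ col(X₂) ⊆ col(X₁)`, each augmented design `Dᵢ = [z Xᵢ]` has full column
rank `dᵢ + 1 < n`, then the expected squared standard error
`σ̂²ᵢ = [Yᵀ(I − Dᵢ(DᵢᵀDᵢ)⁻¹Dᵢᵀ)Y/(n − dᵢ − 1)]·e₁ᵀ(DᵢᵀDᵢ)⁻¹e₁`
satisfies `E[σ̂²₁] ≥ E[σ̂²₂]`. -/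
theorem adet_ols_variance_monotone
    {Ω : Type*} [MeasurableSpace Ω] (μ : Measure Ω) [IsProbabilityMeasure μ]
    {n d₀ d₁ d₂ : ℕ} (τ σ : ℝ) (z : Fin n → ℝ)
    (X₀ : Matrix (Fin n) (Fin d₀) ℝ) (β₀ : Fin d₀ → ℝ)
    (X₁ : Matrix (Fin n) (Fin d₁) ℝ) (X₂ : Matrix (Fin n) (Fin d₂) ℝ)
    (M₀ : Matrix (Fin d₂) (Fin d₀) ℝ) (hX₀ : X₀ = X₂ * M₀)
    (M₂ : Matrix (Fin d₁) (Fin d₂) ℝ) (hX₂ : X₂ = X₁ * M₂)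
    (ε : Ω → Fin n → ℝ)
    (hεint : ∀ i, Integrable (fun ω => ε ω i) μ)
    (hεmean : ∀ i, ∫ ω, ε ω i ∂μ = 0)
    (hε2int : ∀ i j, Integrable (fun ω => ε ω i * ε ω j) μ)
    (hεcov : ∀ i j, ∫ ω, ε ω i * ε ω j ∂μ = if i = j then σ ^ 2 else 0)
    (Y : Ω → Fin n → ℝ)
    (hY : ∀ ω i, Y ω i = τ * z i + X₀.mulVec β₀ i + ε ω i)
    (D₁ : Matrix (Fin n) (Fin (d₁ + 1)) ℝ)
    (hD₁ : ∀ i j, D₁ i j = Fin.cases (z i) (fun k => X₁ i k) j)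
    (D₂ : Matrix (Fin n) (Fin (d₂ + 1)) ℝ)
    (hD₂ : ∀ i j, D₂ i j = Fin.cases (z i) (fun k => X₂ i k) j)
    (hrank₁ : D₁.rank = d₁ + 1) (hrank₂ : D₂.rank = d₂ + 1)
    (hd₁ : d₁ + 1 < n) (hd₂ : d₂ + 1 < n) :
    (∫ ω, (Y ω ⬝ᵥ (1 - D₁ * (D₁ᵀ * D₁)⁻¹ * D₁ᵀ).mulVec (Y ω)) / ((n : ℝ) - d₁ - 1)
        * ((D₁ᵀ * D₁)⁻¹ 0 0) ∂μ) ≥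
      ∫ ω, (Y ω ⬝ᵥ (1 - D₂ * (D₂ᵀ * D₂)⁻¹ * D₂ᵀ).mulVec (Y ω)) / ((n : ℝ) - d₂ - 1)
        * ((D₂ᵀ * D₂)⁻¹ 0 0) ∂μ :=
  adet_ols_variance_monotone_general μ τ σ z X₀ β₀ X₁ X₂ M₀ hX₀ M₂ hX₂ ε hε2int hεcov Y hY D₁ hD₁ D₂
    hD₂ hrank₁ hrank₂ hd₁ hd₂
end

section
/- Let ι be a countable type and p : ι → ℝ a probability mass function (p ≥ 0 and Σ_{k} p(k) = 1), and let K be a random variable on a probability space with values in ι such that P(K = k) = p(k) for all k. Define F(k) = Σ_{k' : p(k') ≤ p(k)} p(k'). Then for every α ∈ (0,1), P(F(K) ≥ α) ≥ 1 − α. -/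
open MeasureTheory

/-!
Let `A = {k | F k < α}`. For any finitely many points of `A`, all of them lie in the level set
`{p ≤ p a₀}` of the one, `a₀`, with the largest mass, so their total mass is at most
`F a₀ < α`; hence `p(A) ≤ α`. Countable subadditivity gives `P(K ∈ A) ≤ α`, and the event
`F(K) ≥ α` is the complement of `K ∈ A`.
-/

section LowerMass

variable {ι : Type*} {p : ι → ℝ}

/-- The paper's `F k` is `lowerMass p (p k)`. -/
noncomputable def lowerMass (p : ι → ℝ) (x : ℝ) : ℝ :=
  ∑' k, if p k ≤ x then p k else 0

theorem sum_le_lowerMass (hp0 : ∀ k, 0 ≤ p k) (hp : Summable p) {S : Finset ι} {x : ℝ}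
    (hS : ∀ k ∈ S, p k ≤ x) : ∑ k ∈ S, p k ≤ lowerMass p x := by
  have hnonneg : ∀ k, 0 ≤ if p k ≤ x then p k else 0 := fun k => by
    split_ifs
    exacts [hp0 k, le_rfl]
  have hsummable : Summable fun k => if p k ≤ x then p k else 0 :=
    hp.of_nonneg_of_le hnonneg fun k => by split_ifs <;> simp [hp0 k]
  calc ∑ k ∈ S, p k = ∑ k ∈ S, if p k ≤ x then p k else 0 :=
        Finset.sum_congr rfl fun k hk => (if_pos (hS k hk)).symm
    _ ≤ lowerMass p x := hsummable.sum_le_tsum S fun k _ => hnonneg k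

theorem sum_le_of_lowerMass_lt (hp0 : ∀ k, 0 ≤ p k) (hp : Summable p) {α : ℝ} (hα : 0 ≤ α)
    {S : Finset ι} (hS : ∀ k ∈ S, lowerMass p (p k) < α) : ∑ k ∈ S, p k ≤ α := by
  rcases S.eq_empty_or_nonempty with rfl | hne
  · simpa using hα
  obtain ⟨a, haS, hmax⟩ := S.exists_max_image p hne
  exact (sum_le_lowerMass hp0 hp hmax).trans (hS a haS).le

theorem tsum_setOf_lowerMass_lt_le (hp0 : ∀ k, 0 ≤ p k) (hp : Summable p) {α : ℝ}
    (hα : 0 ≤ α) : ∑' k : {k | lowerMass p (p k) < α}, p k ≤ α := by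
  refine (hp.subtype _).tsum_le_of_sum_le fun S => ?_
  refine (Finset.sum_map S (Function.Embedding.subtype _) p).symm.trans_le ?_
  refine sum_le_of_lowerMass_lt hp0 hp hα fun k hk => ?_
  obtain ⟨a, -, rfl⟩ := Finset.mem_map.mp hk
  exact a.2

end LowerMass

theorem measure_preimage_le_tsum_fiber {Ω ι : Type*} [MeasurableSpace Ω] [Countable ι]
    (μ : Measure Ω) (K : Ω → ι) (A : Set ι) :
    μ (K ⁻¹' A) ≤ ∑' k : A, μ {ω | K ω = k} := by
  have hcover : K ⁻¹' A = ⋃ k ∈ A, {ω | K ω = k} := by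
    ext ω
    simp
  rw [hcover]
  exact measure_biUnion_le μ A.to_countable _

theorem pmf_level_set_coverage_general
    {Ω ι : Type*} [MeasurableSpace Ω] [Countable ι]
    (μ : Measure Ω) [IsProbabilityMeasure μ]
    (p : ι → ℝ) (hp0 : ∀ k, 0 ≤ p k) (hp1 : ∑' k, p k = 1)
    (K : Ω → ι)
    (hPK : ∀ k, μ {ω | K ω = k} = ENNReal.ofReal (p k))
    (α : ℝ) (hα0 : 0 < α) :
    ENNReal.ofReal (1 - α) ≤
      μ {ω | α ≤ ∑' k', if p k' ≤ p (K ω) then p k' else 0} := by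
  have hp : Summable p := by
    by_contra h
    simp [tsum_eq_zero_of_not_summable h] at hp1
  set A : Set ι := {k | lowerMass p (p k) < α}
  have hA : μ (K ⁻¹' A) ≤ ENNReal.ofReal α :=
    calc μ (K ⁻¹' A) ≤ ∑' k : A, μ {ω | K ω = k} := measure_preimage_le_tsum_fiber μ K A
      _ = ENNReal.ofReal (∑' k : A, p k) := by
        simp only [hPK]
        exact (ENNReal.ofReal_tsum_of_nonneg (fun k : A => hp0 k) (hp.subtype A)).symm
      _ ≤ ENNReal.ofReal α :=
        ENNReal.ofReal_le_ofReal (tsum_setOf_lowerMass_lt_le hp0 hp hα0.le)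
  have hevent : {ω | α ≤ ∑' k', if p k' ≤ p (K ω) then p k' else 0} = (K ⁻¹' A)ᶜ := by
    ext ω
    simp [A, lowerMass]
  rw [hevent, ENNReal.ofReal_sub _ hα0.le, ENNReal.ofReal_one, tsub_le_iff_left]
  calc 1 = μ Set.univ := measure_univ.symm
    _ ≤ μ (K ⁻¹' A) + μ (K ⁻¹' A)ᶜ := measure_univ_le_add_compl _
    _ ≤ ENNReal.ofReal α + μ (K ⁻¹' A)ᶜ := add_le_add_left hA _

/-- Proposition 2 (discrete pmf level-set coverage): if `K` is a discrete random
variable with pmf `p` on a countable type, and `F k = Σ_{k' : p k' ≤ p k} p k'`,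
then `P(F(K) ≥ α) ≥ 1 − α` for every `α ∈ (0,1)`. -/
theorem pmf_level_set_coverage
    {Ω ι : Type*} [MeasurableSpace Ω] [Countable ι]
    [MeasurableSpace ι] [MeasurableSingletonClass ι]
    (μ : Measure Ω) [IsProbabilityMeasure μ]
    (p : ι → ℝ) (hp0 : ∀ k, 0 ≤ p k) (hp1 : ∑' k, p k = 1)
    (K : Ω → ι) (hK : Measurable K)
    (hPK : ∀ k, μ {ω | K ω = k} = ENNReal.ofReal (p k))
    (α : ℝ) (hα0 : 0 < α) (hα1 : α < 1) :
    ENNReal.ofReal (1 - α) ≤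
      μ {ω | α ≤ ∑' k', if p k' ≤ p (K ω) then p k' else 0} :=
  pmf_level_set_coverage_general μ p hp0 hp1 K hPK α hα0
end

section
/- For every natural number m ≥ 1, π/(m + 1) < ∫₀^π (sin x)^m dx < 2·(1/(m + 1) + π/2 − 1), and moreover 2·(1/(m + 1) + π/2 − 1) < 4. -/
/-! On `[0, π/2]` Jordan's inequality `2x/π ≤ sin x ≤ min x 1` holds, strictly at interior points,
so the integral of `sin x ^ m` over `[0, π/2]` lies strictly between the integrals of `(2x/π)^m`
and `(min x 1)^m`, which are `(π/2)/(m+1)` and `1/(m+1) + π/2 - 1`. The reflection `x ↦ π - x`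
doubles these bounds to the interval `[0, π]`. -/

open Real intervalIntegral

theorem integral_sin_pow_eq_two_mul_integral_half (m : ℕ) :
    ∫ x in (0 : ℝ)..π, sin x ^ m = 2 * ∫ x in (0 : ℝ)..π / 2, sin x ^ m := by
  have hint : ∀ a b : ℝ, IntervalIntegrable (fun x => sin x ^ m) MeasureTheory.volume a b :=
    fun a b => (continuous_sin.pow m).intervalIntegrable a b
  have hreflect : ∫ x in π / 2..π, sin x ^ m = ∫ x in (0 : ℝ)..π / 2, sin x ^ m := by
    have h := integral_comp_sub_left (a := 0) (b := π / 2) (fun x => sin x ^ m) π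
    simp only [sin_pi_sub, sub_zero, show π - π / 2 = π / 2 by ring] at h
    exact h.symm
  rw [← integral_add_adjacent_intervals (hint 0 (π / 2)) (hint (π / 2) π), hreflect, two_mul]

theorem integral_div_pow {a : ℝ} (ha : a ≠ 0) (m : ℕ) :
    ∫ x in (0 : ℝ)..a, (x / a) ^ m = a / (m + 1) := by
  simp only [div_pow, integral_div, integral_pow]
  rw [zero_pow m.succ_ne_zero, sub_zero, pow_succ]
  field_simp [pow_ne_zero m ha]

theorem integral_min_one_pow {b : ℝ} (hb : 1 ≤ b) (m : ℕ) :
    ∫ x in (0 : ℝ)..b, min x 1 ^ m = 1 / (m + 1) + (b - 1) := by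
  have hint : ∀ a c : ℝ, IntervalIntegrable (fun x => min x 1 ^ m) MeasureTheory.volume a c :=
    fun a c => ((continuous_id.min continuous_const).pow m).intervalIntegrable a c
  have hleft : ∫ x in (0 : ℝ)..1, min x 1 ^ m = 1 / (m + 1) := by
    rw [integral_congr (g := fun x => x ^ m) fun x hx => by
      rw [Set.uIcc_of_le zero_le_one] at hx
      simp only [min_eq_left hx.2], integral_pow]
    simp
  have hright : ∫ x in (1 : ℝ)..b, min x 1 ^ m = b - 1 := by
    rw [integral_congr (g := fun _ => (1 : ℝ)) fun x hx => by
      rw [Set.uIcc_of_le hb] at hx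
      simp only [min_eq_right hx.1, one_pow], integral_const]
    simp
  rw [← integral_add_adjacent_intervals (hint 0 1) (hint 1 b), hleft, hright]

theorem div_lt_integral_sin_pow_half {m : ℕ} (hm : m ≠ 0) :
    π / 2 / (m + 1) < ∫ x in (0 : ℝ)..π / 2, sin x ^ m := by
  rw [← integral_div_pow pi_div_two_pos.ne' m]
  have hrescale (x : ℝ) : x / (π / 2) = 2 / π * x := by ring
  apply integral_lt_integral_of_continuousOn_of_le_of_exists_lt pi_div_two_pos
  · exact ((continuous_id.div_const _).pow m).continuousOn
  · exact (continuous_sin.pow m).continuousOn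
  · intro x hx
    rw [hrescale]
    exact pow_le_pow_left₀ (by have := hx.1; positivity) (mul_le_sin hx.1.le hx.2) m
  · refine ⟨π / 4, ⟨by positivity, by linarith [pi_pos]⟩, ?_⟩
    rw [hrescale]
    exact pow_lt_pow_left₀ (mul_lt_sin (by positivity) (by linarith [pi_pos])) (by positivity) hm

theorem integral_sin_pow_half_lt {m : ℕ} (hm : m ≠ 0) :
    ∫ x in (0 : ℝ)..π / 2, sin x ^ m < 1 / (m + 1) + (π / 2 - 1) := by
  rw [← integral_min_one_pow one_le_pi_div_two m]
  apply integral_lt_integral_of_continuousOn_of_le_of_exists_lt pi_div_two_pos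
  · exact (continuous_sin.pow m).continuousOn
  · exact ((continuous_id.min continuous_const).pow m).continuousOn
  · intro x hx
    have hsin_nonneg : 0 ≤ sin x := sin_nonneg_of_nonneg_of_le_pi hx.1.le (by linarith [pi_pos, hx.2])
    exact pow_le_pow_left₀ hsin_nonneg (le_min (sin_le hx.1.le) (sin_le_one x)) m
  · refine ⟨1, ⟨zero_le_one, one_le_pi_div_two⟩, ?_⟩
    rw [min_self]
    exact pow_lt_pow_left₀ (sin_lt one_pos) (sin_nonneg_of_nonneg_of_le_pi zero_le_one
      (by linarith [pi_gt_three])) hm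

/-- Bounds on the normalizing constant `∫₀^π sinᵐ x dx` from the proof of the angle
lemma: `π/(m+1) < ∫₀^π sinᵐ x dx < 2(1/(m+1) + π/2 − 1) < 4` for every `m ≥ 1`. -/
theorem integral_sin_pow_bounds (m : ℕ) (hm : 1 ≤ m) :
    (Real.pi / ((m : ℝ) + 1) < ∫ x in (0 : ℝ)..Real.pi, Real.sin x ^ m) ∧
      ((∫ x in (0 : ℝ)..Real.pi, Real.sin x ^ m) <
        2 * (1 / ((m : ℝ) + 1) + Real.pi / 2 - 1)) ∧
      (2 * (1 / ((m : ℝ) + 1) + Real.pi / 2 - 1) < 4) := by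
  have hm0 : m ≠ 0 := Nat.one_le_iff_ne_zero.mp hm
  rw [integral_sin_pow_eq_two_mul_integral_half]
  have hlower := div_lt_integral_sin_pow_half hm0
  have hupper := integral_sin_pow_half_lt hm0
  have hrecip : 1 / ((m : ℝ) + 1) ≤ 1 / 2 := by
    gcongr
    linarith [(Nat.one_le_cast (α := ℝ)).mpr hm]
  refine ⟨?_, ?_, ?_⟩
  · linarith [show π / ((m : ℝ) + 1) = 2 * (π / 2 / (m + 1)) by ring]
  · linarith
  · linarith [pi_lt_d2]
end

section
/- Let W be a subspace of ℝⁿ with orthogonal projection P, let u, u* ∈ ℝⁿ be nonzero, and let 0 ≤ γ₂ ≤ 1. If ⟨u, u*⟩² ≥ (1 − γ₂²)·‖u‖²·‖u*‖², then ‖(I − P)u*‖/‖u*‖ ≤ γ₂ + ‖(I − P)u‖/‖u‖. -/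
/-!
Write `u* = c u + w` with `c = ⟪u, u*⟫ / ‖u‖²` and `w ⊥ u`. The hypothesis says exactly that
`‖w‖ ≤ γ₂ ‖u*‖`, and Cauchy–Schwarz gives `|c| ‖u‖ ≤ ‖u*‖`. Since `I − P` is again an orthogonal
projection it has operator norm at most `1`, so
`‖(I − P)u*‖ ≤ |c| ‖(I − P)u‖ + ‖w‖ ≤ ‖u*‖ (‖(I − P)u‖ / ‖u‖ + γ₂)`.
-/

open Matrix

section InnerProductSpace

variable {E F : Type*} [NormedAddCommGroup E] [InnerProductSpace ℝ E]
  [NormedAddCommGroup F] [NormedSpace ℝ F]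

theorem norm_sub_inner_div_smul_sq_mul (u v : E) (hu : u ≠ 0) :
    ‖v - (inner ℝ u v / ‖u‖ ^ 2) • u‖ ^ 2 * ‖u‖ ^ 2 = ‖u‖ ^ 2 * ‖v‖ ^ 2 - inner ℝ u v ^ 2 := by
  have hu' : ‖u‖ ≠ 0 := norm_ne_zero_iff.mpr hu
  rw [norm_sub_sq_real, real_inner_smul_right, real_inner_comm, norm_smul, Real.norm_eq_abs,
    mul_pow, sq_abs]
  field_simp
  ring

theorem norm_sub_inner_div_smul_le {u v : E} (hu : u ≠ 0) {γ : ℝ} (hγ : 0 ≤ γ)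
    (h : (1 - γ ^ 2) * ‖u‖ ^ 2 * ‖v‖ ^ 2 ≤ inner ℝ u v ^ 2) :
    ‖v - (inner ℝ u v / ‖u‖ ^ 2) • u‖ ≤ γ * ‖v‖ := by
  have hu2 : 0 < ‖u‖ ^ 2 := by positivity
  have hsq := norm_sub_inner_div_smul_sq_mul u v hu
  refine le_of_sq_le_sq ?_ (by positivity)
  nlinarith

theorem norm_inner_div_smul_le (u v : E) : ‖(inner ℝ u v / ‖u‖ ^ 2) • u‖ ≤ ‖v‖ := by
  rcases eq_or_ne u 0 with rfl | hu
  · simp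
  have hu' : 0 < ‖u‖ := norm_pos_iff.mpr hu
  rw [norm_smul, Real.norm_eq_abs, abs_div, abs_of_nonneg (sq_nonneg ‖u‖), div_mul_eq_mul_div,
    div_le_iff₀ (by positivity)]
  nlinarith [abs_real_inner_le_norm u v]

theorem ContinuousLinearMap.norm_apply_div_norm_le_add_of_inner_sq_ge (T : E →L[ℝ] F)
    (hT : ‖T‖ ≤ 1) {u v : E} (hu : u ≠ 0) {γ : ℝ} (hγ : 0 ≤ γ)
    (h : (1 - γ ^ 2) * ‖u‖ ^ 2 * ‖v‖ ^ 2 ≤ inner ℝ u v ^ 2) :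
    ‖T v‖ / ‖v‖ ≤ γ + ‖T u‖ / ‖u‖ := by
  set c := inner ℝ u v / ‖u‖ ^ 2
  have hu' : 0 < ‖u‖ := norm_pos_iff.mpr hu
  have hcu : |c| * ‖u‖ ≤ ‖v‖ := by
    simpa only [norm_smul, Real.norm_eq_abs] using norm_inner_div_smul_le u v
  have hresidual : ‖T (v - c • u)‖ ≤ γ * ‖v‖ :=
    (T.le_of_opNorm_le hT _).trans (by simpa using norm_sub_inner_div_smul_le hu hγ h)
  refine div_le_of_le_mul₀ (norm_nonneg _) (by positivity) ?_
  calc ‖T v‖ = ‖c • T u + T (v - c • u)‖ := by rw [map_sub, map_smul, add_sub_cancel]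
    _ ≤ |c| * ‖T u‖ + γ * ‖v‖ := by
      grw [norm_add_le, norm_smul, Real.norm_eq_abs, hresidual]
    _ = |c| * ‖u‖ * (‖T u‖ / ‖u‖) + γ * ‖v‖ := by field_simp
    _ ≤ ‖v‖ * (‖T u‖ / ‖u‖) + γ * ‖v‖ := by gcongr
    _ = (γ + ‖T u‖ / ‖u‖) * ‖v‖ := by ring

end InnerProductSpace

section EuclideanSpace

variable {n : Type*} [Fintype n]

theorem EuclideanSpace.norm_toLp_sq (x : n → ℝ) : ‖WithLp.toLp 2 x‖ ^ 2 = x ⬝ᵥ x := by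
  rw [← real_inner_self_eq_norm_sq, EuclideanSpace.inner_toLp_toLp, star_trivial]

theorem EuclideanSpace.norm_toLp (x : n → ℝ) : ‖WithLp.toLp 2 x‖ = √(x ⬝ᵥ x) := by
  rw [← norm_toLp_sq, Real.sqrt_sq (norm_nonneg _)]

theorem EuclideanSpace.real_inner_toLp_toLp (x y : n → ℝ) :
    inner ℝ (WithLp.toLp 2 x) (WithLp.toLp 2 y) = x ⬝ᵥ y := by
  rw [EuclideanSpace.inner_toLp_toLp, star_trivial, dotProduct_comm]

end EuclideanSpace

theorem Matrix.isStarProjection_of_transpose_eq_of_mul_self_eq {n : Type*} [Fintype n]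
    [DecidableEq n] {P : Matrix n n ℝ} (hPsymm : Pᵀ = P) (hPidem : P * P = P) :
    IsStarProjection P :=
  ⟨hPidem, by
    rw [IsSelfAdjoint, star_eq_conjTranspose, conjTranspose_eq_transpose_of_trivial, hPsymm]⟩

theorem residual_fraction_stable_general
    {n : ℕ} (P : Matrix (Fin n) (Fin n) ℝ) (hPsymm : Pᵀ = P) (hPidem : P * P = P)
    (u ustar : Fin n → ℝ) (hu : u ≠ 0)
    (γ₂ : ℝ) (hγ₂0 : 0 ≤ γ₂)
    (h : (1 - γ₂ ^ 2) * (u ⬝ᵥ u) * (ustar ⬝ᵥ ustar) ≤ (u ⬝ᵥ ustar) ^ 2) :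
    Real.sqrt ((1 - P).mulVec ustar ⬝ᵥ (1 - P).mulVec ustar) /
        Real.sqrt (ustar ⬝ᵥ ustar) ≤
      γ₂ + Real.sqrt ((1 - P).mulVec u ⬝ᵥ (1 - P).mulVec u) / Real.sqrt (u ⬝ᵥ u) := by
  have hQ : IsStarProjection (toEuclideanCLM (𝕜 := ℝ) (1 - P)) :=
    ((isStarProjection_of_transpose_eq_of_mul_self_eq hPsymm hPidem).one_sub).map _
  simp only [← EuclideanSpace.norm_toLp, ← toEuclideanCLM_toLp]
  refine ContinuousLinearMap.norm_apply_div_norm_le_add_of_inner_sq_ge _ (hQ.norm_le _)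
    (by simpa using hu) hγ₂0 ?_
  simpa only [EuclideanSpace.norm_toLp_sq, EuclideanSpace.real_inner_toLp_toLp] using h

/-- Deterministic stability of the normalized residual (from the proof of Lemma 7):
if `u, u*` are nonzero and `⟨u, u*⟩² ≥ (1 − γ₂²)‖u‖²‖u*‖²` with `0 ≤ γ₂ ≤ 1`, then
`‖(I − P)u*‖/‖u*‖ ≤ γ₂ + ‖(I − P)u‖/‖u‖` for any orthogonal projection matrix `P`. -/
theorem residual_fraction_stable
    {n : ℕ} (P : Matrix (Fin n) (Fin n) ℝ) (hPsymm : Pᵀ = P) (hPidem : P * P = P)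
    (u ustar : Fin n → ℝ) (hu : u ≠ 0) (hustar : ustar ≠ 0)
    (γ₂ : ℝ) (hγ₂0 : 0 ≤ γ₂) (hγ₂1 : γ₂ ≤ 1)
    (h : (1 - γ₂ ^ 2) * (u ⬝ᵥ u) * (ustar ⬝ᵥ ustar) ≤ (u ⬝ᵥ ustar) ^ 2) :
    Real.sqrt ((1 - P).mulVec ustar ⬝ᵥ (1 - P).mulVec ustar) /
        Real.sqrt (ustar ⬝ᵥ ustar) ≤
      γ₂ + Real.sqrt ((1 - P).mulVec u ⬝ᵥ (1 - P).mulVec u) / Real.sqrt (u ⬝ᵥ u) :=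
  residual_fraction_stable_general P hPsymm hPidem u ustar hu γ₂ hγ₂0 h
end
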